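/- Let r be a positive integer, a_{k₁,k₂} real constants for k₁ + k₂ ≤ 2r, and β ≠ 0 a real number. Let ξ₁, ξ₂ : ℝ → ℝ be 2r-times continuously differentiable and define φ(x₁, x₂) = ξ₁(x₁) cos(β x₂) + ξ₂(x₁) sin(β x₂). Then (L φ)(x₁, x₂) = 0 for all real x₁, x₂ if and only if the coupled ordinary differential system (L₁₁ ξ₁)(x₁) + (L₁₂ ξ₂)(x₁) = 0 and (L₂₁ ξ₁)(x₁) + (L₂₂ ξ₂)(x₁) = 0 holds for all real x₁, where (L₁₁ ξ)(x₁) = (L₂₂ ξ)(x₁) = Σ_{k₁ + 2k₂ ≤ 2r} a_{k₁,2k₂} (−1)^{k₂} β^{2k₂} ξ^{(k₁)}(x₁), (L₁₂ ξ)(x₁) = Σ_{k₁ + 2k₂ + 1 ≤ 2r} a_{k₁,2k₂+1} (−1)^{k₂} β^{2k₂+1} ξ^{(k₁)}(x₁), and (L₂₁ ξ)(x₁) = −(L₁₂ ξ)(x₁). -/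

import Mathlib

open Finset

/-- Mixed partial derivative of order `k₁` in the first variable and `k₂` in the second
variable of a curried two-variable function `v : ℝ → ℝ → ℝ`. -/
noncomputable def mixedPartial (k₁ k₂ : ℕ) (v : ℝ → ℝ → ℝ) (x₁ x₂ : ℝ) : ℝ :=
  iteratedDeriv k₁ (fun y₁ => iteratedDeriv k₂ (fun y₂ => v y₁ y₂) x₂) x₁

/-- The `2r`-th order constant-coefficient partial differential operator
`(L v)(x₁,x₂) = Σ_{k₁+k₂≤2r} a_{k₁,k₂} v^{(k₁,k₂)}(x₁,x₂)`. -/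
noncomputable def Lop (r : ℕ) (a : ℕ → ℕ → ℝ) (v : ℝ → ℝ → ℝ) (x₁ x₂ : ℝ) : ℝ :=
  ∑ p ∈ (range (2 * r + 1) ×ˢ range (2 * r + 1)).filter (fun p => p.1 + p.2 ≤ 2 * r),
    a p.1 p.2 * mixedPartial p.1 p.2 v x₁ x₂

/-- `(L₁₁ ξ)(x₁) = (L₂₂ ξ)(x₁) = Σ_{k₁+2k₂≤2r} a_{k₁,2k₂} (−1)^{k₂} β^{2k₂} ξ^{(k₁)}(x₁)`. -/
noncomputable def L11 (r : ℕ) (a : ℕ → ℕ → ℝ) (β : ℝ) (ξ : ℝ → ℝ) (x₁ : ℝ) : ℝ :=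
  ∑ p ∈ (range (2 * r + 1) ×ˢ range (2 * r + 1)).filter (fun p => p.1 + 2 * p.2 ≤ 2 * r),
    a p.1 (2 * p.2) * (-1 : ℝ) ^ p.2 * β ^ (2 * p.2) * iteratedDeriv p.1 ξ x₁

/-- `(L₁₂ ξ)(x₁) = Σ_{k₁+2k₂+1≤2r} a_{k₁,2k₂+1} (−1)^{k₂} β^{2k₂+1} ξ^{(k₁)}(x₁)`;
`L₂₁ = −L₁₂`. -/
noncomputable def L12 (r : ℕ) (a : ℕ → ℕ → ℝ) (β : ℝ) (ξ : ℝ → ℝ) (x₁ : ℝ) : ℝ :=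
  ∑ p ∈ (range (2 * r + 1) ×ˢ range (2 * r + 1)).filter
      (fun p => p.1 + 2 * p.2 + 1 ≤ 2 * r),
    a p.1 (2 * p.2 + 1) * (-1 : ℝ) ^ p.2 * β ^ (2 * p.2 + 1) * iteratedDeriv p.1 ξ x₁

/-!
Each mixed partial of `φ` factors as `ξᵢ^{(k₁)}` times a derivative of `cos (β ·)` or
`sin (β ·)`, and that derivative is `±β^{k₂}` times `cos` or `sin` according to the parity of
`k₂`. Splitting `L` by this parity gives
`L φ = (L₁₁ξ₁ + L₁₂ξ₂) cos (β x₂) + (L₂₁ξ₁ + L₂₂ξ₂) sin (β x₂)`, and since `β ≠ 0` the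
two coefficients are read off at `x₂ = 0` and `x₂ = π / (2β)`.
-/

lemma sum_triangle_eq_sum_even_add_sum_odd {M : Type*} [AddCommMonoid M] (N : ℕ)
    (g : ℕ → ℕ → M) :
    ∑ p ∈ (range (N + 1) ×ˢ range (N + 1)).filter (fun p => p.1 + p.2 ≤ N), g p.1 p.2
      = ∑ p ∈ (range (N + 1) ×ˢ range (N + 1)).filter (fun p => p.1 + 2 * p.2 ≤ N),
          g p.1 (2 * p.2)
        + ∑ p ∈ (range (N + 1) ×ˢ range (N + 1)).filter (fun p => p.1 + 2 * p.2 + 1 ≤ N),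
          g p.1 (2 * p.2 + 1) := by
  rw [← sum_filter_add_sum_filter_not _ (fun p => Even p.2)]
  congr 1 <;> symm
  · refine sum_nbij' (fun q => (q.1, 2 * q.2)) (fun p => (p.1, p.2 / 2)) ?_ ?_ ?_ ?_ ?_ <;>
      simp [Nat.even_iff, Prod.ext_iff] <;> omega
  · refine sum_nbij' (fun q => (q.1, 2 * q.2 + 1)) (fun p => (p.1, p.2 / 2)) ?_ ?_ ?_ ?_ ?_ <;>
      simp [Nat.even_iff, Prod.ext_iff] <;> omega

lemma mixedPartial_mul_add_mul {k₁ k₂ : ℕ} {ξ₁ ξ₂ u₁ u₂ : ℝ → ℝ}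
    (hξ₁ : ContDiff ℝ k₁ ξ₁) (hξ₂ : ContDiff ℝ k₁ ξ₂)
    (hu₁ : ContDiff ℝ k₂ u₁) (hu₂ : ContDiff ℝ k₂ u₂) (x₁ x₂ : ℝ) :
    mixedPartial k₁ k₂ (fun y₁ y₂ => ξ₁ y₁ * u₁ y₂ + ξ₂ y₁ * u₂ y₂) x₁ x₂
      = iteratedDeriv k₁ ξ₁ x₁ * iteratedDeriv k₂ u₁ x₂
        + iteratedDeriv k₁ ξ₂ x₁ * iteratedDeriv k₂ u₂ x₂ := by
  have inner (y₁ : ℝ) :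
      iteratedDeriv k₂ (fun y₂ => ξ₁ y₁ * u₁ y₂ + ξ₂ y₁ * u₂ y₂) x₂
        = ξ₁ y₁ * iteratedDeriv k₂ u₁ x₂ + ξ₂ y₁ * iteratedDeriv k₂ u₂ x₂ := by
    rw [iteratedDeriv_fun_add (contDiff_const.mul hu₁).contDiffAt
      (contDiff_const.mul hu₂).contDiffAt]
    simp only [iteratedDeriv_const_mul_field]
  simp only [mixedPartial, inner]
  rw [iteratedDeriv_fun_add (hξ₁.mul contDiff_const).contDiffAt
    (hξ₂.mul contDiff_const).contDiffAt]
  simp only [iteratedDeriv_mul_const_field]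

lemma iteratedDeriv_cos_const_mul_even (β : ℝ) (m : ℕ) (y : ℝ) :
    iteratedDeriv (2 * m) (fun y => Real.cos (β * y)) y
      = (-1) ^ m * β ^ (2 * m) * Real.cos (β * y) := by
  simp only [iteratedDeriv_comp_const_mul Real.contDiff_cos, Real.iteratedDeriv_even_cos,
    Pi.mul_apply, Pi.pow_apply, Pi.neg_apply, Pi.one_apply]
  ring

lemma iteratedDeriv_sin_const_mul_even (β : ℝ) (m : ℕ) (y : ℝ) :
    iteratedDeriv (2 * m) (fun y => Real.sin (β * y)) y
      = (-1) ^ m * β ^ (2 * m) * Real.sin (β * y) := by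
  simp only [iteratedDeriv_comp_const_mul Real.contDiff_sin, Real.iteratedDeriv_even_sin,
    Pi.mul_apply, Pi.pow_apply, Pi.neg_apply, Pi.one_apply]
  ring

lemma iteratedDeriv_cos_const_mul_odd (β : ℝ) (m : ℕ) (y : ℝ) :
    iteratedDeriv (2 * m + 1) (fun y => Real.cos (β * y)) y
      = -((-1) ^ m * β ^ (2 * m + 1) * Real.sin (β * y)) := by
  simp only [iteratedDeriv_comp_const_mul Real.contDiff_cos, Real.iteratedDeriv_odd_cos,
    Pi.mul_apply, Pi.pow_apply, Pi.neg_apply, Pi.one_apply]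
  ring

lemma iteratedDeriv_sin_const_mul_odd (β : ℝ) (m : ℕ) (y : ℝ) :
    iteratedDeriv (2 * m + 1) (fun y => Real.sin (β * y)) y
      = (-1) ^ m * β ^ (2 * m + 1) * Real.cos (β * y) := by
  simp only [iteratedDeriv_comp_const_mul Real.contDiff_sin, Real.iteratedDeriv_odd_sin,
    Pi.mul_apply, Pi.pow_apply, Pi.neg_apply, Pi.one_apply]
  ring

lemma forall_mul_cos_add_mul_sin_eq_zero_iff {β : ℝ} (hβ : β ≠ 0) (A B : ℝ) :
    (∀ x, A * Real.cos (β * x) + B * Real.sin (β * x) = 0) ↔ A = 0 ∧ B = 0 := by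
  refine ⟨fun h => ⟨?_, ?_⟩, fun ⟨hA, hB⟩ x => by simp [hA, hB]⟩
  · simpa using h 0
  · have hquarter : β * (Real.pi / (2 * β)) = Real.pi / 2 := by field_simp
    simpa [hquarter] using h (Real.pi / (2 * β))

section SeparatedSolution

variable {ξ₁ ξ₂ : ℝ → ℝ} (β : ℝ)

lemma mixedPartial_cos_sin_even {k₁ : ℕ} (hξ₁ : ContDiff ℝ k₁ ξ₁) (hξ₂ : ContDiff ℝ k₁ ξ₂)
    (m : ℕ) (x₁ x₂ : ℝ) :
    mixedPartial k₁ (2 * m)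
        (fun y₁ y₂ => ξ₁ y₁ * Real.cos (β * y₂) + ξ₂ y₁ * Real.sin (β * y₂)) x₁ x₂
      = (-1) ^ m * β ^ (2 * m) * (iteratedDeriv k₁ ξ₁ x₁ * Real.cos (β * x₂)
          + iteratedDeriv k₁ ξ₂ x₁ * Real.sin (β * x₂)) := by
  rw [mixedPartial_mul_add_mul hξ₁ hξ₂ (by fun_prop) (by fun_prop),
    iteratedDeriv_cos_const_mul_even, iteratedDeriv_sin_const_mul_even]
  ring

lemma mixedPartial_cos_sin_odd {k₁ : ℕ} (hξ₁ : ContDiff ℝ k₁ ξ₁) (hξ₂ : ContDiff ℝ k₁ ξ₂)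
    (m : ℕ) (x₁ x₂ : ℝ) :
    mixedPartial k₁ (2 * m + 1)
        (fun y₁ y₂ => ξ₁ y₁ * Real.cos (β * y₂) + ξ₂ y₁ * Real.sin (β * y₂)) x₁ x₂
      = (-1) ^ m * β ^ (2 * m + 1) * (iteratedDeriv k₁ ξ₂ x₁ * Real.cos (β * x₂)
          - iteratedDeriv k₁ ξ₁ x₁ * Real.sin (β * x₂)) := by
  rw [mixedPartial_mul_add_mul hξ₁ hξ₂ (by fun_prop) (by fun_prop),
    iteratedDeriv_cos_const_mul_odd, iteratedDeriv_sin_const_mul_odd]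
  ring

lemma Lop_cos_sin {r : ℕ} (a : ℕ → ℕ → ℝ)
    (hξ₁ : ContDiff ℝ (2 * r : ℕ) ξ₁) (hξ₂ : ContDiff ℝ (2 * r : ℕ) ξ₂) (x₁ x₂ : ℝ) :
    Lop r a (fun y₁ y₂ => ξ₁ y₁ * Real.cos (β * y₂) + ξ₂ y₁ * Real.sin (β * y₂)) x₁ x₂
      = (L11 r a β ξ₁ x₁ + L12 r a β ξ₂ x₁) * Real.cos (β * x₂)
        + (-(L12 r a β ξ₁ x₁) + L11 r a β ξ₂ x₁) * Real.sin (β * x₂) := by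
  have contDiff_of_le {k : ℕ} (hk : k ≤ 2 * r) : ContDiff ℝ k ξ₁ ∧ ContDiff ℝ k ξ₂ := by
    have hk' : (k : WithTop ℕ∞) ≤ (2 * r : ℕ) := by exact_mod_cast hk
    exact ⟨hξ₁.of_le hk', hξ₂.of_le hk'⟩
  have even_part :
      ∑ p ∈ (range (2 * r + 1) ×ˢ range (2 * r + 1)).filter (fun p => p.1 + 2 * p.2 ≤ 2 * r),
        a p.1 (2 * p.2) * mixedPartial p.1 (2 * p.2)
          (fun y₁ y₂ => ξ₁ y₁ * Real.cos (β * y₂) + ξ₂ y₁ * Real.sin (β * y₂)) x₁ x₂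
        = L11 r a β ξ₁ x₁ * Real.cos (β * x₂) + L11 r a β ξ₂ x₁ * Real.sin (β * x₂) := by
    simp only [L11, sum_mul, ← sum_add_distrib]
    refine sum_congr rfl fun p hp => ?_
    obtain ⟨h₁, h₂⟩ := contDiff_of_le (k := p.1) (by have := (mem_filter.1 hp).2; omega)
    rw [mixedPartial_cos_sin_even β h₁ h₂]
    ring
  have odd_part :
      ∑ p ∈ (range (2 * r + 1) ×ˢ range (2 * r + 1)).filter
          (fun p => p.1 + 2 * p.2 + 1 ≤ 2 * r),
        a p.1 (2 * p.2 + 1) * mixedPartial p.1 (2 * p.2 + 1)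
          (fun y₁ y₂ => ξ₁ y₁ * Real.cos (β * y₂) + ξ₂ y₁ * Real.sin (β * y₂)) x₁ x₂
        = L12 r a β ξ₂ x₁ * Real.cos (β * x₂) - L12 r a β ξ₁ x₁ * Real.sin (β * x₂) := by
    simp only [L12, sum_mul, ← sum_sub_distrib]
    refine sum_congr rfl fun p hp => ?_
    obtain ⟨h₁, h₂⟩ := contDiff_of_le (k := p.1) (by have := (mem_filter.1 hp).2; omega)
    rw [mixedPartial_cos_sin_odd β h₁ h₂]
    ring
  rw [Lop, sum_triangle_eq_sum_even_add_sum_odd (2 * r)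
    (fun k₁ k₂ => a k₁ k₂ * mixedPartial k₁ k₂ _ x₁ x₂), even_part, odd_part]
  ring

end SeparatedSolution

theorem stmt_10_general (r : ℕ) (a : ℕ → ℕ → ℝ) (β : ℝ) (hβ : β ≠ 0)
    (ξ₁ ξ₂ : ℝ → ℝ)
    (hξ₁ : ContDiff ℝ (2 * r : ℕ) ξ₁) (hξ₂ : ContDiff ℝ (2 * r : ℕ) ξ₂) :
    (∀ x₁ x₂ : ℝ,
      Lop r a (fun y₁ y₂ => ξ₁ y₁ * Real.cos (β * y₂) + ξ₂ y₁ * Real.sin (β * y₂)) x₁ x₂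
        = 0)
    ↔ (∀ x₁ : ℝ,
        L11 r a β ξ₁ x₁ + L12 r a β ξ₂ x₁ = 0 ∧
        -(L12 r a β ξ₁ x₁) + L11 r a β ξ₂ x₁ = 0) := by
  simp only [Lop_cos_sin β a hξ₁ hξ₂]
  exact forall_congr' fun x₁ => forall_mul_cos_add_mul_sin_eq_zero_iff hβ _ _

/-- for `β ≠ 0`, `L φ = 0` identically for
`φ(x₁,x₂) = ξ₁(x₁) cos(β x₂) + ξ₂(x₁) sin(β x₂)` if and only if the coupled ordinary
differential system `L₁₁ξ₁ + L₁₂ξ₂ = 0`, `L₂₁ξ₁ + L₂₂ξ₂ = 0` (with `L₂₁ = −L₁₂`,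
`L₂₂ = L₁₁`) holds identically. -/
theorem stmt_10 (r : ℕ) (hr : 0 < r) (a : ℕ → ℕ → ℝ) (β : ℝ) (hβ : β ≠ 0)
    (ξ₁ ξ₂ : ℝ → ℝ)
    (hξ₁ : ContDiff ℝ (2 * r : ℕ) ξ₁) (hξ₂ : ContDiff ℝ (2 * r : ℕ) ξ₂) :
    (∀ x₁ x₂ : ℝ,
      Lop r a (fun y₁ y₂ => ξ₁ y₁ * Real.cos (β * y₂) + ξ₂ y₁ * Real.sin (β * y₂)) x₁ x₂
        = 0)
    ↔ (∀ x₁ : ℝ,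
        L11 r a β ξ₁ x₁ + L12 r a β ξ₂ x₁ = 0 ∧
        -(L12 r a β ξ₁ x₁) + L11 r a β ξ₂ x₁ = 0) :=
  stmt_10_general r a β hβ ξ₁ ξ₂ hξ₁ hξ₂
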